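/- arXiv:2603.18404 — 5 statements merged into one kernel-verified Lean document; each statement's English description precedes it below -/
import Mathlib

section
/- Assume that for every e ∈ {1,…,M}, every j ∈ {1,…,d}, and every component function s_j ∈ S_j: the integrals ∫ s_j(y,a_e)² f_e(y) dy, ∫ |∂_j s_j(y,a_e)| f_e(y) dy and ∫ ‖∇ log f_e(y)‖² f_e(y) dy are finite, and the integration-by-parts identity ∫ s_j(y,a_e) ∂_j f_e(y) dy = − ∫ ∂_j s_j(y,a_e) f_e(y) dy holds. If s* minimizes the causal score-matching loss L over the product class S = ∏_j S_j, then for every j ∈ {1,…,d} the component s*_j minimizes the functional J_j(s_j) := Σ_{e=1}^M ∫ [ s_j(y,a_e)² + 2 ∂_j s_j(y,a_e) ] f_e(y) dy over S_j. -/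
open MeasureTheory

/-- The partial derivative of `g : ℝ^d → ℝ` with respect to the `j`-th coordinate. -/
noncomputable def pderiv' {d : ℕ} (j : Fin d) (g : (Fin d → ℝ) → ℝ)
    (y : Fin d → ℝ) : ℝ :=
  fderiv ℝ g y (Pi.single j 1)

/-- Causal score matching decouples. Fix `d, M`, labels `a_1,…,a_M`, parent
sets `pa(j) ⊆ [d]∖{j}`, and for each `j` a class `S_j` of component functions
`s_j(y, a)` that are differentiable in `y` and depend on `y` only through the
coordinates in `{j} ∪ pa(j)`. For differentiable positive probability densities
`f_1,…,f_M` on `ℝ^d`, assume for every `e`, `j`, and `s_j ∈ S_j` that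
`∫ s_j(y,a_e)² f_e(y) dy`, `∫ |∂_j s_j(y,a_e)| f_e(y) dy` and
`∫ ‖∇ log f_e(y)‖² f_e(y) dy` are finite and that the integration-by-parts identity
`∫ s_j(y,a_e) ∂_j f_e(y) dy = −∫ ∂_j s_j(y,a_e) f_e(y) dy` holds. If `s*` minimizes
the causal score-matching loss
`L(s) = ∑_e ∫ ‖s(y,a_e) − ∇ log f_e(y)‖² f_e(y) dy`
over the product class `S = ∏_j S_j`, then for every `j` the component `s*_j`
minimizes `J_j(s_j) = ∑_e ∫ [s_j(y,a_e)² + 2 ∂_j s_j(y,a_e)] f_e(y) dy` over `S_j`. -/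
theorem causal_score_matching_decouples
    {d M : ℕ} {Label : Type*} (a : Fin M → Label)
    (pa : Fin d → Finset (Fin d)) (hpa : ∀ j, j ∉ pa j)
    (S : Fin d → Set ((Fin d → ℝ) → Label → ℝ))
    (hS : ∀ j, ∀ sj ∈ S j,
      (∀ α : Label, Differentiable ℝ (fun y => sj y α)) ∧
      (∀ (α : Label) (y y' : Fin d → ℝ),
        (∀ i ∈ insert j (pa j), y i = y' i) → sj y α = sj y' α))
    (f : Fin M → (Fin d → ℝ) → ℝ)
    (hfpos : ∀ e y, 0 < f e y)
    (hfdiff : ∀ e, Differentiable ℝ (f e))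
    (hfprob : ∀ e, ∫ y, f e y = 1)
    (hint_sq : ∀ (e : Fin M) (j : Fin d), ∀ sj ∈ S j,
      Integrable (fun y => (sj y (a e)) ^ 2 * f e y))
    (hint_deriv : ∀ (e : Fin M) (j : Fin d), ∀ sj ∈ S j,
      Integrable (fun y => |pderiv' j (fun y' => sj y' (a e)) y| * f e y))
    (hint_score : ∀ e : Fin M,
      Integrable (fun y =>
        (∑ j, (pderiv' j (fun y' => Real.log (f e y')) y) ^ 2) * f e y))
    (hibp : ∀ (e : Fin M) (j : Fin d), ∀ sj ∈ S j,
      ∫ y, sj y (a e) * pderiv' j (f e) y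
        = -∫ y, pderiv' j (fun y' => sj y' (a e)) y * f e y)
    (L : ((j : Fin d) → (Fin d → ℝ) → Label → ℝ) → ℝ)
    (hL : ∀ s : (j : Fin d) → (Fin d → ℝ) → Label → ℝ,
      L s = ∑ e, ∫ y,
        (∑ j, (s j y (a e) - pderiv' j (fun y' => Real.log (f e y')) y) ^ 2) * f e y)
    (J : (j : Fin d) → ((Fin d → ℝ) → Label → ℝ) → ℝ)
    (hJ : ∀ (j : Fin d) (sj : (Fin d → ℝ) → Label → ℝ),
      J j sj = ∑ e, ∫ y,
        ((sj y (a e)) ^ 2 + 2 * pderiv' j (fun y' => sj y' (a e)) y) * f e y)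
    (sstar : (j : Fin d) → (Fin d → ℝ) → Label → ℝ)
    (hmem : ∀ j, sstar j ∈ S j)
    (hmin : ∀ t : (j : Fin d) → (Fin d → ℝ) → Label → ℝ,
      (∀ j, t j ∈ S j) → L sstar ≤ L t) :
    ∀ j : Fin d, ∀ u ∈ S j, J j (sstar j) ≤ J j u := by
  classical
  -- score components
  set g : Fin M → Fin d → (Fin d → ℝ) → ℝ :=
    fun e j y => pderiv' j (fun y' => Real.log (f e y')) y with hgdef
  have hgf : ∀ e j y, g e j y * f e y = pderiv' j (f e) y := by
    intro e j y
    have hF : HasFDerivAt (f e) (fderiv ℝ (f e) y) y := (hfdiff e y).hasFDerivAt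
    have hlog : HasDerivAt Real.log (f e y)⁻¹ (f e y) :=
      Real.hasDerivAt_log (hfpos e y).ne'
    have hcomp : HasFDerivAt (fun y' => Real.log (f e y'))
        ((f e y)⁻¹ • fderiv ℝ (f e) y) y := hlog.comp_hasFDerivAt y hF
    have h1 : g e j y = (f e y)⁻¹ * pderiv' j (f e) y := by
      simp [hgdef, pderiv', hcomp.fderiv]
    rw [h1]
    field_simp [(hfpos e y).ne']
  have measg : ∀ e j, Measurable (g e j) := by
    intro e j
    exact measurable_fderiv_apply_const ℝ _ _
  have measf : ∀ e, Measurable (f e) := fun e => (hfdiff e).continuous.measurable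
  -- key decomposition of L
  have key : ∀ s : (j : Fin d) → (Fin d → ℝ) → Label → ℝ, (∀ j', s j' ∈ S j') →
      L s = (∑ j', J j' (s j')) + ∑ e, ∫ y, (∑ j', (g e j' y) ^ 2) * f e y := by
    intro s hs
    have per_e : ∀ e : Fin M,
        (∫ y, (∑ j', (s j' y (a e) - g e j' y) ^ 2) * f e y)
          = (∑ j', ∫ y, ((s j' y (a e)) ^ 2
              + 2 * pderiv' j' (fun y' => s j' y' (a e)) y) * f e y)
            + ∫ y, (∑ j', (g e j' y) ^ 2) * f e y := by
      intro e
      -- integrability facts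
      have hA : ∀ j', Integrable (fun y => (s j' y (a e)) ^ 2 * f e y) :=
        fun j' => hint_sq e j' (s j') (hs j')
      have hmeasd : ∀ j', Measurable (fun y => pderiv' j' (fun y' => s j' y' (a e)) y) :=
        fun j' => measurable_fderiv_apply_const ℝ _ _
      have hmeass : ∀ j', Measurable (fun y => s j' y (a e)) :=
        fun j' => ((hS j' (s j') (hs j')).1 (a e)).continuous.measurable
      have hD : ∀ j', Integrable
          (fun y => pderiv' j' (fun y' => s j' y' (a e)) y * f e y) := by
        intro j'
        refine (hint_deriv e j' (s j') (hs j')).mono'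
          (((hmeasd j').mul (measf e)).aestronglyMeasurable) ?_
        filter_upwards with y
        have := (hfpos e y).le
        rw [Real.norm_eq_abs, abs_mul, abs_of_nonneg this]
      have hG : ∀ j', Integrable (fun y => (g e j' y) ^ 2 * f e y) := by
        intro j'
        refine (hint_score e).mono'
          ((((measg e j').pow_const 2).mul (measf e)).aestronglyMeasurable) ?_
        filter_upwards with y
        rw [Real.norm_eq_abs, abs_of_nonneg (mul_nonneg (sq_nonneg _) (hfpos e y).le)]
        have h2 : (g e j' y) ^ 2 ≤ ∑ j'', (g e j'' y) ^ 2 :=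
          Finset.single_le_sum (f := fun j'' => (g e j'' y) ^ 2)
            (fun i _ => sq_nonneg _) (Finset.mem_univ j')
        exact mul_le_mul_of_nonneg_right h2 (hfpos e y).le
      have hC : ∀ j', Integrable (fun y => s j' y (a e) * g e j' y * f e y) := by
        intro j'
        refine (((hA j').add (hG j')).const_mul (1/2 : ℝ)).mono'
          ((((hmeass j').mul (measg e j')).mul (measf e)).aestronglyMeasurable) ?_
        filter_upwards with y
        rw [Real.norm_eq_abs, abs_mul, abs_of_nonneg (hfpos e y).le, abs_mul]
        have hfy := (hfpos e y).le
        have hab : |s j' y (a e)| * |g e j' y|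
            ≤ 1/2 * ((s j' y (a e))^2 + (g e j' y)^2) := by
          nlinarith [sq_nonneg (|s j' y (a e)| - |g e j' y|), sq_abs (s j' y (a e)),
            sq_abs (g e j' y)]
        calc |s j' y (a e)| * |g e j' y| * f e y
            ≤ (1/2 * ((s j' y (a e))^2 + (g e j' y)^2)) * f e y :=
              mul_le_mul_of_nonneg_right hab hfy
          _ = 1/2 * ((s j' y (a e))^2 * f e y + (g e j' y)^2 * f e y) := by ring
      have hEach : ∀ j', Integrable (fun y => (s j' y (a e) - g e j' y) ^ 2 * f e y) := by
        intro j'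
        refine (((hA j').sub ((hC j').const_mul 2)).add (hG j')).congr ?_
        filter_upwards with y
        simp only [Pi.add_apply, Pi.sub_apply]
        ring
      -- split the sum
      have hsplit : (∫ y, (∑ j', (s j' y (a e) - g e j' y) ^ 2) * f e y)
          = ∑ j', ∫ y, (s j' y (a e) - g e j' y) ^ 2 * f e y := by
        rw [show (fun y => (∑ j', (s j' y (a e) - g e j' y) ^ 2) * f e y)
            = (fun y => ∑ j', (s j' y (a e) - g e j' y) ^ 2 * f e y) from
          funext fun y => Finset.sum_mul _ _ _]
        exact integral_finset_sum _ (fun j' _ => hEach j')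
      have hGsplit : (∫ y, (∑ j', (g e j' y) ^ 2) * f e y)
          = ∑ j', ∫ y, (g e j' y) ^ 2 * f e y := by
        rw [show (fun y => (∑ j', (g e j' y) ^ 2) * f e y)
            = (fun y => ∑ j', (g e j' y) ^ 2 * f e y) from
          funext fun y => Finset.sum_mul _ _ _]
        exact integral_finset_sum _ (fun j' _ => hG j')
      have hcross : ∀ j', (∫ y, s j' y (a e) * g e j' y * f e y)
          = -∫ y, pderiv' j' (fun y' => s j' y' (a e)) y * f e y := by
        intro j'
        rw [show (fun y => s j' y (a e) * g e j' y * f e y)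
            = (fun y => s j' y (a e) * pderiv' j' (f e) y) from
          funext fun y => by rw [mul_assoc, hgf e j' y]]
        exact hibp e j' (s j') (hs j')
      have hperj : ∀ j', (∫ y, (s j' y (a e) - g e j' y) ^ 2 * f e y)
          = (∫ y, ((s j' y (a e)) ^ 2
              + 2 * pderiv' j' (fun y' => s j' y' (a e)) y) * f e y)
            + ∫ y, (g e j' y) ^ 2 * f e y := by
        intro j'
        have e1 : (∫ y, (s j' y (a e) - g e j' y) ^ 2 * f e y)
            = (∫ y, ((s j' y (a e)) ^ 2 * f e y
                - 2 * (s j' y (a e) * g e j' y * f e y)) + (g e j' y) ^ 2 * f e y) := by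
          congr 1; funext y; ring
        have isub : Integrable (fun y => (s j' y (a e)) ^ 2 * f e y
            - 2 * (s j' y (a e) * g e j' y * f e y)) := by
          refine ((hA j').sub ((hC j').const_mul 2)).congr ?_
          filter_upwards with y
          simp [Pi.sub_apply]
        rw [e1, integral_add isub (hG j'),
          integral_sub (hA j') ((hC j').const_mul 2), integral_const_mul, hcross j']
        have e2 : (∫ y, ((s j' y (a e)) ^ 2
              + 2 * pderiv' j' (fun y' => s j' y' (a e)) y) * f e y)
            = (∫ y, (s j' y (a e)) ^ 2 * f e y)
              + 2 * ∫ y, pderiv' j' (fun y' => s j' y' (a e)) y * f e y := by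
          rw [show (fun y => ((s j' y (a e)) ^ 2
                + 2 * pderiv' j' (fun y' => s j' y' (a e)) y) * f e y)
              = (fun y => (s j' y (a e)) ^ 2 * f e y
                + 2 * (pderiv' j' (fun y' => s j' y' (a e)) y * f e y)) from
            funext fun y => by ring]
          rw [integral_add (hA j') ((hD j').const_mul 2), integral_const_mul]
        rw [e2]
        ring
      rw [hsplit, hGsplit]
      rw [Finset.sum_congr rfl (fun j' _ => hperj j'), Finset.sum_add_distrib]
    rw [hL]
    rw [Finset.sum_congr rfl (fun e _ => per_e e), Finset.sum_add_distrib]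
    congr 1
    rw [Finset.sum_comm]
    exact Finset.sum_congr rfl (fun j' _ => (hJ j' (s j')).symm)
  -- main argument
  intro j u hu
  set t : (j : Fin d) → (Fin d → ℝ) → Label → ℝ := Function.update sstar j u with htdef
  have ht : ∀ j', t j' ∈ S j' := by
    intro j'
    by_cases h : j' = j
    · subst h; simpa [htdef] using hu
    · simpa [htdef, Function.update_of_ne h] using hmem j'
  have hLle := hmin t ht
  rw [key sstar hmem, key t ht] at hLle
  have hsum : (∑ j', J j' (sstar j')) ≤ ∑ j', J j' (t j') := by linarith
  have h1 : (∑ j', J j' (sstar j'))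
      = J j (sstar j) + ∑ j' ∈ Finset.univ.erase j, J j' (sstar j') :=
    (Finset.add_sum_erase _ _ (Finset.mem_univ j)).symm
  have h2 : (∑ j', J j' (t j'))
      = J j u + ∑ j' ∈ Finset.univ.erase j, J j' (sstar j') := by
    rw [← Finset.add_sum_erase _ (fun j' => J j' (t j')) (Finset.mem_univ j)]
    congr 1
    · simp [htdef]
    · exact Finset.sum_congr rfl (fun j' hj' =>
        by rw [htdef, Function.update_of_ne (Finset.mem_erase.1 hj').1])
  linarith [h1 ▸ h2 ▸ hsum]
end

section
/- Suppose that ∫ ‖s(y)‖² f(y) dy < ∞, ∫ ‖∇ log f(y)‖² f(y) dy < ∞, ∫ |∂_j s_j(y)| f(y) dy < ∞ for each j, and that for each j ∈ {1,…,d} the integration-by-parts identity ∫ s_j(y) ∂_j f(y) dy = − ∫ ∂_j s_j(y) f(y) dy holds. Then ∫ ‖s(y) − ∇ log f(y)‖² f(y) dy = ∫ ( ‖s(y)‖² + 2 Σ_{j=1}^d ∂_j s_j(y) ) f(y) dy + ∫ ‖∇ log f(y)‖² f(y) dy, and all integrals appearing are finite. -/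
open MeasureTheory

/-- Hyvärinen's score-matching identity. For a differentiable positive
probability density `f` on `ℝ^d` and a differentiable vector field `s = (s_1,…,s_d)`,
assuming the stated integrability conditions and the integration-by-parts identities
`∫ s_j ∂_j f = −∫ (∂_j s_j) f`, one has
`∫ ‖s − ∇ log f‖² f = ∫ (‖s‖² + 2 ∑_j ∂_j s_j) f + ∫ ‖∇ log f‖² f`,
and all integrals appearing are finite. -/
theorem score_matching_identity
    (d : ℕ) (f : (Fin d → ℝ) → ℝ)
    (hfpos : ∀ y, 0 < f y)
    (hfdiff : Differentiable ℝ f)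
    (hfprob : ∫ y, f y = 1)
    (s : Fin d → (Fin d → ℝ) → ℝ)
    (hsdiff : ∀ j, Differentiable ℝ (s j))
    (h1 : Integrable (fun y => (∑ j, (s j y) ^ 2) * f y))
    (h2 : Integrable (fun y =>
      (∑ j, (pderiv' j (fun y' => Real.log (f y')) y) ^ 2) * f y))
    (h3 : ∀ j, Integrable (fun y => |pderiv' j (s j) y| * f y))
    (hibp : ∀ j, ∫ y, s j y * pderiv' j f y = -∫ y, pderiv' j (s j) y * f y) :
    Integrable (fun y =>
        (∑ j, (s j y - pderiv' j (fun y' => Real.log (f y')) y) ^ 2) * f y) ∧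
    Integrable (fun y => ((∑ j, (s j y) ^ 2) + 2 * ∑ j, pderiv' j (s j) y) * f y) ∧
    ∫ y, (∑ j, (s j y - pderiv' j (fun y' => Real.log (f y')) y) ^ 2) * f y
      = (∫ y, ((∑ j, (s j y) ^ 2) + 2 * ∑ j, pderiv' j (s j) y) * f y)
        + ∫ y, (∑ j, (pderiv' j (fun y' => Real.log (f y')) y) ^ 2) * f y := by
  set g : Fin d → (Fin d → ℝ) → ℝ :=
    fun j y => pderiv' j (fun y' => Real.log (f y')) y with hgdef
  have hfne : ∀ y, f y ≠ 0 := fun y => (hfpos y).ne'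
  -- g j y * f y = ∂_j f y
  have hgf : ∀ j y, g j y * f y = pderiv' j f y := by
    intro j y
    have hlog : HasFDerivAt (fun y' => Real.log (f y')) ((f y)⁻¹ • fderiv ℝ f y) y :=
      (Real.hasDerivAt_log (hfne y)).comp_hasFDerivAt y (hfdiff y).hasFDerivAt
    have : g j y = (f y)⁻¹ * (fderiv ℝ f y (Pi.single j 1)) := by
      simp [hgdef, pderiv', hlog.fderiv]
    rw [this, pderiv']
    field_simp
    rw [mul_comm, mul_div_assoc, div_self (hfne y), mul_one]
  -- measurability facts
  have hfc : Continuous f := hfdiff.continuous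
  have hms : ∀ j, AEStronglyMeasurable (s j) volume :=
    fun j => (hsdiff j).continuous.aestronglyMeasurable
  have hmds : ∀ j, AEStronglyMeasurable (fun y => pderiv' j (s j) y) volume := by
    intro j
    exact (measurable_fderiv_apply_const ℝ (s j) (Pi.single j 1)).aestronglyMeasurable
  have hmg : ∀ j, AEStronglyMeasurable (g j) volume := by
    intro j
    exact (measurable_fderiv_apply_const ℝ (fun y' => Real.log (f y'))
      (Pi.single j 1)).aestronglyMeasurable
  -- each s_j^2 f integrable
  have hsq : ∀ j, Integrable (fun y => s j y ^ 2 * f y) := by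
    intro j
    refine h1.mono' (((hms j).mul (hms j)).mul hfc.aestronglyMeasurable |>.congr ?_) ?_
    · filter_upwards with y
      simp only [Pi.mul_apply]; ring
    · filter_upwards with y
      have h0 : 0 ≤ s j y ^ 2 * f y := mul_nonneg (sq_nonneg _) (hfpos y).le
      rw [Real.norm_eq_abs, abs_of_nonneg h0]
      have : s j y ^ 2 ≤ ∑ i, s i y ^ 2 :=
        Finset.single_le_sum (fun i _ => sq_nonneg (s i y)) (Finset.mem_univ j)
      exact mul_le_mul_of_nonneg_right this (hfpos y).le
  have hgsq : ∀ j, Integrable (fun y => g j y ^ 2 * f y) := by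
    intro j
    refine h2.mono' (((hmg j).mul (hmg j)).mul hfc.aestronglyMeasurable |>.congr ?_) ?_
    · filter_upwards with y
      simp only [Pi.mul_apply]; ring
    · filter_upwards with y
      have h0 : 0 ≤ g j y ^ 2 * f y := mul_nonneg (sq_nonneg _) (hfpos y).le
      rw [Real.norm_eq_abs, abs_of_nonneg h0]
      have : g j y ^ 2 ≤ ∑ i, g i y ^ 2 :=
        Finset.single_le_sum (fun i _ => sq_nonneg (g i y)) (Finset.mem_univ j)
      exact mul_le_mul_of_nonneg_right this (hfpos y).le
  -- cross terms integrable
  have hcross : ∀ j, Integrable (fun y => s j y * g j y * f y) := by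
    intro j
    have hb : Integrable (fun y => (1/2 : ℝ) * (s j y ^ 2 * f y + g j y ^ 2 * f y)) :=
      ((hsq j).add (hgsq j)).const_mul _
    refine hb.mono' (((hms j).mul (hmg j)).mul hfc.aestronglyMeasurable) ?_
    filter_upwards with y
    rw [Real.norm_eq_abs, abs_mul, abs_of_nonneg (hfpos y).le]
    have h1' : |s j y * g j y| ≤ (1/2) * (s j y ^ 2 + g j y ^ 2) := by
      rw [abs_mul]
      nlinarith [sq_nonneg (|s j y| - |g j y|), sq_abs (s j y), sq_abs (g j y),
        abs_nonneg (s j y), abs_nonneg (g j y)]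
    calc |s j y * g j y| * f y ≤ (1/2) * (s j y ^ 2 + g j y ^ 2) * f y :=
          mul_le_mul_of_nonneg_right h1' (hfpos y).le
      _ = (1/2 : ℝ) * (s j y ^ 2 * f y + g j y ^ 2 * f y) := by ring
  -- ∂_j s_j * f integrable
  have hds : ∀ j, Integrable (fun y => pderiv' j (s j) y * f y) := by
    intro j
    refine (h3 j).mono' ((hmds j).mul hfc.aestronglyMeasurable) ?_
    filter_upwards with y
    rw [Real.norm_eq_abs, abs_mul, abs_of_nonneg (hfpos y).le]
  -- s_j * ∂_j f integrable
  have hsdf : ∀ j, Integrable (fun y => s j y * pderiv' j f y) := by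
    intro j
    refine (hcross j).congr ?_
    filter_upwards with y
    rw [mul_assoc, hgf j y]
  -- pointwise expansion of the LHS
  have hpt : ∀ y, (∑ j, (s j y - g j y) ^ 2) * f y
      = (∑ j, s j y ^ 2) * f y - 2 * (∑ j, s j y * g j y * f y)
        + (∑ j, g j y ^ 2) * f y := by
    intro y
    simp only [Finset.sum_mul, Finset.mul_sum]
    rw [← Finset.sum_sub_distrib, ← Finset.sum_add_distrib]
    exact Finset.sum_congr rfl fun j _ => by ring
  have hIcross : Integrable (fun y => ∑ j, s j y * g j y * f y) :=
    integrable_finset_sum _ fun j _ => hcross j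
  have hIds : Integrable (fun y => ∑ j, pderiv' j (s j) y * f y) :=
    integrable_finset_sum _ fun j _ => hds j
  have hI1 : Integrable (fun y => (∑ j, (s j y - g j y) ^ 2) * f y) := by
    have := ((h1.sub (hIcross.const_mul 2)).add h2)
    refine this.congr ?_
    filter_upwards with y
    exact (hpt y).symm
  -- pointwise expansion of the middle
  have hpt2 : ∀ y, ((∑ j, s j y ^ 2) + 2 * ∑ j, pderiv' j (s j) y) * f y
      = (∑ j, s j y ^ 2) * f y + 2 * (∑ j, pderiv' j (s j) y * f y) := by
    intro y
    rw [add_mul, mul_assoc, Finset.sum_mul, Finset.sum_mul]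
  have hI2 : Integrable (fun y =>
      ((∑ j, s j y ^ 2) + 2 * ∑ j, pderiv' j (s j) y) * f y) := by
    refine (h1.add (hIds.const_mul 2)).congr ?_
    filter_upwards with y
    exact (hpt2 y).symm
  refine ⟨hI1, hI2, ?_⟩
  -- compute the integrals
  have hcross_eq : ∀ j, ∫ y, s j y * g j y * f y = -∫ y, pderiv' j (s j) y * f y := by
    intro j
    rw [← hibp j]
    congr 1
    funext y
    rw [mul_assoc, hgf j y]
  have hL : ∫ y, (∑ j, (s j y - g j y) ^ 2) * f y
      = (∫ y, (∑ j, s j y ^ 2) * f y) - 2 * (∑ j, ∫ y, s j y * g j y * f y)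
        + ∫ y, (∑ j, g j y ^ 2) * f y := by
    have hc2 : Integrable (fun y => 2 * (∑ j, s j y * g j y * f y)) :=
      hIcross.const_mul 2
    have hsub : Integrable (fun y =>
        (∑ j, s j y ^ 2) * f y - 2 * (∑ j, s j y * g j y * f y)) := h1.sub hc2
    rw [show (fun y => (∑ j, (s j y - g j y) ^ 2) * f y)
        = fun y => ((∑ j, s j y ^ 2) * f y - 2 * (∑ j, s j y * g j y * f y))
          + (∑ j, g j y ^ 2) * f y from funext hpt]
    rw [integral_add hsub h2, integral_sub h1 hc2, integral_const_mul,
      integral_finset_sum _ fun j _ => hcross j]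
  have hM : ∫ y, ((∑ j, s j y ^ 2) + 2 * ∑ j, pderiv' j (s j) y) * f y
      = (∫ y, (∑ j, s j y ^ 2) * f y) + 2 * (∑ j, ∫ y, pderiv' j (s j) y * f y) := by
    rw [show (fun y => ((∑ j, s j y ^ 2) + 2 * ∑ j, pderiv' j (s j) y) * f y)
        = fun y => (∑ j, s j y ^ 2) * f y + 2 * (∑ j, pderiv' j (s j) y * f y)
        from funext hpt2]
    have hc2 : Integrable (fun y => 2 * (∑ j, pderiv' j (s j) y * f y)) :=
      hIds.const_mul 2
    rw [integral_add h1 hc2, integral_const_mul,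
      integral_finset_sum _ fun j _ => hds j]
  rw [hL, hM]
  have : ∑ j, ∫ y, s j y * g j y * f y = -∑ j, ∫ y, pderiv' j (s j) y * f y := by
    rw [← Finset.sum_neg_distrib]
    exact Finset.sum_congr rfl fun j _ => hcross_eq j
  rw [this]
  ring
end

section
/- Let σ > 0 and let g be a Borel probability measure on ℝ^d, and set f(x) := ∫ φ_σ(x − z) dg(z). Then for every x ∈ ℝ^d, the integral ∫ ‖z‖ φ_σ(x − z) dg(z) is finite and the posterior mean satisfies Tweedie's formula: f(x)^{−1} ∫ z φ_σ(x − z) dg(z) = x + σ² ∇f(x) / f(x), i.e., the posterior mean of z given observation x equals x + σ² ∇ log f(x). -/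
open MeasureTheory Real

/-- The isotropic Gaussian density `φ_σ(u) = (2πσ²)^{-d/2} exp(-‖u‖²/(2σ²))` on `ℝ^d`. -/
noncomputable def gaussDens (d : ℕ) (σ : ℝ) (u : EuclideanSpace ℝ (Fin d)) : ℝ :=
  (2 * π * σ ^ 2) ^ (-(d : ℝ) / 2) * Real.exp (-‖u‖ ^ 2 / (2 * σ ^ 2))

section tweedieAux

open InnerProductSpace

variable {d : ℕ} {σ : ℝ}

lemma gauss_pos (hσ : 0 < σ) (u : EuclideanSpace ℝ (Fin d)) : 0 < gaussDens d σ u := by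
  unfold gaussDens
  have h : (0:ℝ) < 2 * π * σ ^ 2 := by positivity
  positivity

lemma gauss_cont : Continuous (gaussDens d σ) := by
  unfold gaussDens; fun_prop

lemma gauss_le (hσ : 0 < σ) (u : EuclideanSpace ℝ (Fin d)) :
    gaussDens d σ u ≤ (2 * π * σ ^ 2) ^ (-(d : ℝ) / 2) := by
  unfold gaussDens
  have h : (0:ℝ) < (2 * π * σ ^ 2) ^ (-(d : ℝ) / 2) := by positivity
  nth_rewrite 2 [← mul_one ((2 * π * σ ^ 2) ^ (-(d : ℝ) / 2))]
  refine mul_le_mul_of_nonneg_left ?_ h.le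
  rw [Real.exp_le_one_iff]
  have h2 : (0:ℝ) < 2 * σ ^ 2 := by positivity
  exact div_nonpos_of_nonpos_of_nonneg (neg_nonpos.mpr (by positivity)) h2.le

lemma key_exp (hσ : 0 < σ) (t : ℝ) (h0 : 0 ≤ t) :
    t * Real.exp (-t ^ 2 / (2 * σ ^ 2)) ≤ σ := by
  set s := t ^ 2 / (2 * σ ^ 2) with hs
  have hs0 : 0 ≤ s := by positivity
  have hs2 : t ^ 2 = s * (2 * σ ^ 2) := by rw [hs]; field_simp
  have h1 : (1:ℝ) + s ≤ Real.exp s := by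
    have := Real.add_one_le_exp s; linarith
  have h2 : Real.exp (-t ^ 2 / (2 * σ ^ 2)) ≤ (1 + s)⁻¹ := by
    rw [neg_div, ← hs, Real.exp_neg]
    exact inv_anti₀ (by positivity) h1
  have h3 : t * (1 + s)⁻¹ ≤ σ := by
    rw [← div_eq_mul_inv, div_le_iff₀ (by positivity)]
    nlinarith [sq_nonneg (t - σ), hσ]
  calc t * Real.exp (-t ^ 2 / (2 * σ ^ 2)) ≤ t * (1 + s)⁻¹ :=
        mul_le_mul_of_nonneg_left h2 h0
    _ ≤ σ := h3

lemma norm_mul_gauss_le (hσ : 0 < σ) (u : EuclideanSpace ℝ (Fin d)) :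
    ‖u‖ * gaussDens d σ u ≤ σ * (2 * π * σ ^ 2) ^ (-(d : ℝ) / 2) := by
  unfold gaussDens
  have hC : (0:ℝ) < (2 * π * σ ^ 2) ^ (-(d : ℝ) / 2) := by positivity
  have key := key_exp hσ ‖u‖ (norm_nonneg u)
  calc ‖u‖ * ((2 * π * σ ^ 2) ^ (-(d : ℝ) / 2) * Real.exp (-‖u‖ ^ 2 / (2 * σ ^ 2)))
      = (‖u‖ * Real.exp (-‖u‖ ^ 2 / (2 * σ ^ 2))) * (2 * π * σ ^ 2) ^ (-(d : ℝ) / 2) := by ring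
    _ ≤ σ * (2 * π * σ ^ 2) ^ (-(d : ℝ) / 2) := mul_le_mul_of_nonneg_right key hC.le

lemma gauss_hasFDerivAt (hσ : 0 < σ) (z x : EuclideanSpace ℝ (Fin d)) :
    HasFDerivAt (fun y => gaussDens d σ (y - z))
      (toDual ℝ (EuclideanSpace ℝ (Fin d))
        ((-(σ ^ 2)⁻¹ * gaussDens d σ (x - z)) • (x - z))) x := by
  have hσ2 : σ ^ 2 ≠ 0 := by positivity
  have hfun : (fun y : EuclideanSpace ℝ (Fin d) => gaussDens d σ (y - z))
      = fun y => (2 * π * σ ^ 2) ^ (-(d : ℝ) / 2)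
          * Real.exp ((-(2 * σ ^ 2)⁻¹) * ‖y - z‖ ^ 2) := by
    funext y
    unfold gaussDens
    congr 1
    congr 1
    ring
  rw [hfun]
  have h1 : HasFDerivAt (fun y : EuclideanSpace ℝ (Fin d) => y - z)
      (ContinuousLinearMap.id ℝ (EuclideanSpace ℝ (Fin d))) x :=
    (hasFDerivAt_id x).sub_const z
  have h2 := h1.norm_sq
  have h3 := h2.const_mul (-(2 * σ ^ 2)⁻¹)
  have h4 := (h3.exp).const_mul ((2 * π * σ ^ 2) ^ (-(d : ℝ) / 2))
  refine h4.congr_fderiv ?_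
  symm
  ext v
  rw [toDual_apply_apply, real_inner_smul_left]
  simp only [ContinuousLinearMap.smul_apply, ContinuousLinearMap.coe_smul',
    Pi.smul_apply, ContinuousLinearMap.coe_comp', Function.comp_apply,
    ContinuousLinearMap.coe_id', id_eq, innerSL_apply_apply, smul_eq_mul, nsmul_eq_mul,
    Nat.cast_ofNat]
  have hexp : Real.exp (-‖x - z‖ ^ 2 / (2 * σ ^ 2))
      = Real.exp ((-(2 * σ ^ 2)⁻¹) * ‖x - z‖ ^ 2) := by congr 1; ring
  unfold gaussDens
  rw [hexp]
  field_simp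

end tweedieAux

/-- Tweedie's formula in the normal means model `z ~ g`,
`x = z + ε`, `ε ~ N(0, σ² I_d)`, with marginal density `f(x) = ∫ φ_σ(x − z) dg(z)`:
for every `x`, `∫ ‖z‖ φ_σ(x − z) dg(z)` is finite and the posterior mean satisfies
`f(x)⁻¹ ∫ z φ_σ(x − z) dg(z) = x + σ² ∇f(x) / f(x)`,
i.e., the posterior mean of `z` given `x` equals `x + σ² ∇ log f(x)`. -/
theorem tweedie_formula
    (d : ℕ) (σ : ℝ) (hσ : 0 < σ)
    (g : Measure (EuclideanSpace ℝ (Fin d))) [IsProbabilityMeasure g]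
    (f : EuclideanSpace ℝ (Fin d) → ℝ)
    (hf : ∀ x, f x = ∫ z, gaussDens d σ (x - z) ∂g) :
    ∀ x : EuclideanSpace ℝ (Fin d),
      Integrable (fun z => ‖z‖ * gaussDens d σ (x - z)) g ∧
      (f x)⁻¹ • (∫ z, gaussDens d σ (x - z) • z ∂g)
        = x + (σ ^ 2 / f x) • gradient f x := by
  intro x
  have hσ2 : (σ : ℝ) ^ 2 ≠ 0 := by positivity
  set C : ℝ := (2 * π * σ ^ 2) ^ (-(d : ℝ) / 2) with hCdef
  have hC0 : 0 < C := by rw [hCdef]; positivity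
  -- continuity facts
  have hcsub : Continuous (fun z : EuclideanSpace ℝ (Fin d) => x - z) :=
    continuous_const.sub continuous_id
  have hcφ : Continuous (fun z : EuclideanSpace ℝ (Fin d) => gaussDens d σ (x - z)) :=
    gauss_cont.comp hcsub
  -- basic norm bound for z
  have hznorm : ∀ z : EuclideanSpace ℝ (Fin d), ‖z‖ ≤ ‖x‖ + ‖x - z‖ := by
    intro z
    have : ‖x - (x - z)‖ ≤ ‖x‖ + ‖x - z‖ := norm_sub_le x (x - z)
    simpa using this
  -- integrability of φ
  have Iφ : Integrable (fun z => gaussDens d σ (x - z)) g := by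
    refine (integrable_const C).mono' hcφ.aestronglyMeasurable (ae_of_all _ fun z => ?_)
    rw [Real.norm_eq_abs, abs_of_pos (gauss_pos hσ _)]
    exact gauss_le hσ _
  -- integrability of ‖z‖ φ
  have Inφ : Integrable (fun z => ‖z‖ * gaussDens d σ (x - z)) g := by
    refine (integrable_const (‖x‖ * C + σ * C)).mono'
      (continuous_norm.mul hcφ).aestronglyMeasurable (ae_of_all _ fun z => ?_)
    have h1 := gauss_le hσ (x - z)
    have h2 := norm_mul_gauss_le hσ (x - z)
    have h3 := (gauss_pos hσ (x - z)).le
    have h4 := hznorm z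
    rw [Real.norm_eq_abs, abs_of_nonneg (by positivity)]
    have h5 : ‖z‖ * gaussDens d σ (x - z)
        ≤ (‖x‖ + ‖x - z‖) * gaussDens d σ (x - z) :=
      mul_le_mul_of_nonneg_right h4 h3
    have h6 : ‖x‖ * gaussDens d σ (x - z) ≤ ‖x‖ * C :=
      mul_le_mul_of_nonneg_left h1 (norm_nonneg x)
    nlinarith
  refine ⟨Inφ, ?_⟩
  -- integrability of φ • z
  have Izφ : Integrable (fun z => gaussDens d σ (x - z) • z) g := by
    refine Inφ.mono' (hcφ.smul continuous_id).aestronglyMeasurable (ae_of_all _ fun z => ?_)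
    rw [norm_smul, Real.norm_eq_abs, abs_of_pos (gauss_pos hσ _)]
    exact le_of_eq (mul_comm _ _)
  -- integrability of v z := (-(σ²)⁻¹ φ(x-z)) • (x - z)
  have Iv : Integrable (fun z => (-(σ ^ 2)⁻¹ * gaussDens d σ (x - z)) • (x - z)) g := by
    refine (integrable_const ((σ ^ 2)⁻¹ * (σ * C))).mono'
      (((continuous_const.mul hcφ).smul hcsub)).aestronglyMeasurable
      (ae_of_all _ fun z => ?_)
    rw [norm_smul, Real.norm_eq_abs, abs_mul, abs_neg, abs_inv, abs_of_pos (by positivity : (0:ℝ) < σ ^ 2),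
      abs_of_pos (gauss_pos hσ _)]
    have h3 : gaussDens d σ (x - z) * ‖x - z‖ ≤ σ * C := by
      rw [mul_comm]; exact norm_mul_gauss_le hσ (x - z)
    rw [mul_assoc]
    exact mul_le_mul_of_nonneg_left h3 (by positivity)
  -- differentiation under the integral sign
  have hF := hasFDerivAt_integral_of_dominated_of_fderiv_le
    (𝕜 := ℝ) (μ := g)
    (F := fun y z => gaussDens d σ (y - z))
    (F' := fun y z => InnerProductSpace.toDual ℝ (EuclideanSpace ℝ (Fin d))
      ((-(σ ^ 2)⁻¹ * gaussDens d σ (y - z)) • (y - z)))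
    (x₀ := x) (bound := fun _ => (σ ^ 2)⁻¹ * (σ * C)) (s := Metric.ball x 1) (Metric.ball_mem_nhds x one_pos)
    (Filter.Eventually.of_forall fun y =>
      (gauss_cont.comp (continuous_const.sub continuous_id)).aestronglyMeasurable)
    Iφ
    (((InnerProductSpace.toDual ℝ (EuclideanSpace ℝ (Fin d))).continuous.comp
      ((continuous_const.mul hcφ).smul hcsub)).aestronglyMeasurable)
    (ae_of_all _ fun z y _ => by
      rw [LinearIsometryEquiv.norm_map, norm_smul, Real.norm_eq_abs, abs_mul, abs_neg,
        abs_inv, abs_of_pos (by positivity : (0:ℝ) < σ ^ 2), abs_of_pos (gauss_pos hσ _)]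
      have h2 := norm_mul_gauss_le hσ (y - z)
      have h3 : gaussDens d σ (y - z) * ‖y - z‖ ≤ σ * C := by rw [mul_comm]; exact h2
      rw [mul_assoc]
      exact mul_le_mul_of_nonneg_left h3 (by positivity))
    (integrable_const _)
    (ae_of_all _ fun z y _ => gauss_hasFDerivAt hσ z y)
  -- transfer the integral through toDual
  have hcomm : (∫ z, InnerProductSpace.toDual ℝ (EuclideanSpace ℝ (Fin d))
        ((-(σ ^ 2)⁻¹ * gaussDens d σ (x - z)) • (x - z)) ∂g)
      = InnerProductSpace.toDual ℝ (EuclideanSpace ℝ (Fin d))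
        (∫ z, (-(σ ^ 2)⁻¹ * gaussDens d σ (x - z)) • (x - z) ∂g) :=
    (InnerProductSpace.toDual ℝ (EuclideanSpace ℝ (Fin d))).toLinearIsometry.integral_comp_comm _
  rw [hcomm] at hF
  have hffun : f = fun y => ∫ z, gaussDens d σ (y - z) ∂g := funext hf
  have hGrad : HasGradientAt f (∫ z, (-(σ ^ 2)⁻¹ * gaussDens d σ (x - z)) • (x - z) ∂g) x := by
    rw [hasGradientAt_iff_hasFDerivAt, hffun]
    exact hF
  have hgradeq := hGrad.gradient
  -- compute the integral of v
  have hveq : (fun z => (-(σ ^ 2)⁻¹ * gaussDens d σ (x - z)) • (x - z))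
      = fun z => (σ ^ 2)⁻¹ • (gaussDens d σ (x - z) • z - gaussDens d σ (x - z) • x) := by
    funext z
    module
  have hIv : (∫ z, (-(σ ^ 2)⁻¹ * gaussDens d σ (x - z)) • (x - z) ∂g)
      = (σ ^ 2)⁻¹ • ((∫ z, gaussDens d σ (x - z) • z ∂g) - f x • x) := by
    rw [hveq, integral_smul, integral_sub Izφ (Iφ.smul_const x), integral_smul_const, ← hf x]
  -- positivity of f x
  have hfx : 0 < f x := by
    rw [hf x]
    refine (integral_pos_iff_support_of_nonneg (fun z => (gauss_pos hσ _).le) Iφ).mpr ?_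
    have hsupp : Function.support (fun z => gaussDens d σ (x - z)) = Set.univ := by
      ext z; simp [Function.support, (gauss_pos hσ (x - z)).ne']
    rw [hsupp]
    simp
  -- final algebra
  rw [hgradeq, hIv, smul_smul]
  have hcoef : σ ^ 2 / f x * (σ ^ 2)⁻¹ = (f x)⁻¹ := by
    field_simp
  rw [hcoef, smul_sub, smul_smul, inv_mul_cancel₀ hfx.ne', one_smul]
  abel
end

section
/- Let p, q ∈ ℕ with q ≤ p, let A ∈ ℝ^{p×q}, and let Λ ∈ ℝ^{q×q} be a symmetric positive semidefinite matrix. Then AᵀA = Λ² if and only if there exists a matrix O ∈ ℝ^{p×q} with orthonormal columns (OᵀO = I_q) such that A = OΛ. -/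
open Matrix

private lemma toEuclideanLin_mul {a b c : ℕ} (M : Matrix (Fin c) (Fin b) ℝ)
    (N : Matrix (Fin b) (Fin a) ℝ) :
    Matrix.toEuclideanLin (M * N) =
      (Matrix.toEuclideanLin M).comp (Matrix.toEuclideanLin N) := by
  simp only [Matrix.toEuclideanLin_eq_toLin]
  exact Matrix.toLin_mul _ (PiLp.basisFun 2 ℝ (Fin b)) _ M N

/-- For `A ∈ ℝ^{p×q}` (with `q ≤ p`) and a symmetric positive semidefinite
`Λ ∈ ℝ^{q×q}`, one has `AᵀA = Λ²` if and only if `A = OΛ` for some `O ∈ ℝ^{p×q}` with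
orthonormal columns (`OᵀO = I_q`). -/
theorem gram_eq_sq_iff_orthonormal_factor
    (p q : ℕ) (hpq : q ≤ p)
    (A : Matrix (Fin p) (Fin q) ℝ)
    (Λ : Matrix (Fin q) (Fin q) ℝ) (hΛ : Λ.PosSemidef) :
    Aᵀ * A = Λ ^ 2 ↔
      ∃ O : Matrix (Fin p) (Fin q) ℝ, Oᵀ * O = 1 ∧ A = O * Λ := by
  have hΛt : Λᵀ = Λ := by
    rw [← Matrix.conjTranspose_eq_transpose_of_trivial]; exact hΛ.1
  constructor
  · intro hA
    classical
    -- the "tall identity" matrix J with JᵀJ = 1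
    set J : Matrix (Fin p) (Fin q) ℝ :=
      (1 : Matrix (Fin p) (Fin p) ℝ).submatrix id (Fin.castLE hpq) with hJdef
    have hJJ : Jᵀ * J = 1 := by
      rw [hJdef, Matrix.transpose_submatrix, Matrix.transpose_one,
        ← Matrix.submatrix_mul (1 : Matrix (Fin p) (Fin p) ℝ) 1 (Fin.castLE hpq) id
          (Fin.castLE hpq) Function.bijective_id, Matrix.one_mul,
        Matrix.submatrix_one _ (Fin.castLE_injective hpq)]
    set B : Matrix (Fin p) (Fin q) ℝ := J * Λ with hBdef
    have hBB : Bᵀ * B = Λ ^ 2 := by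
      rw [hBdef, Matrix.transpose_mul, Matrix.mul_assoc, ← Matrix.mul_assoc Jᵀ, hJJ,
        Matrix.one_mul, hΛt, ← pow_two]
    set fA := Matrix.toEuclideanLin A with hfA
    set fB := Matrix.toEuclideanLin B with hfB
    -- equality of Gram operators
    have hGram : (LinearMap.adjoint fA).comp fA = (LinearMap.adjoint fB).comp fB := by
      rw [← Matrix.toEuclideanLin_conjTranspose_eq_adjoint,
        ← Matrix.toEuclideanLin_conjTranspose_eq_adjoint, hfA, hfB,
        ← toEuclideanLin_mul, ← toEuclideanLin_mul,
        Matrix.conjTranspose_eq_transpose_of_trivial,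
        Matrix.conjTranspose_eq_transpose_of_trivial, hA, hBB]
    have hnorm : ∀ x, ‖fA x‖ = ‖fB x‖ := by
      intro x
      have h1 : (inner ℝ (fA x) (fA x) : ℝ) = inner ℝ (fB x) (fB x) := by
        rw [← LinearMap.adjoint_inner_right fA, ← LinearMap.adjoint_inner_right fB]
        have := congrFun (congrArg DFunLike.coe hGram) x
        simp only [LinearMap.comp_apply] at this
        rw [this]
      rw [real_inner_self_eq_norm_mul_norm, real_inner_self_eq_norm_mul_norm] at h1
      have := congrArg Real.sqrt h1
      rwa [Real.sqrt_mul_self (norm_nonneg _), Real.sqrt_mul_self (norm_nonneg _)] at this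
    have hker : LinearMap.ker fB ≤ LinearMap.ker fA := by
      intro x hx
      rw [LinearMap.mem_ker] at hx ⊢
      have := hnorm x
      rw [hx, norm_zero, norm_eq_zero] at this
      exact this
    -- the partial isometry on the range of fB
    let fA' := (LinearMap.ker fB).liftQ fA hker
    let e := fB.quotKerEquivRange
    let g : LinearMap.range fB →ₗ[ℝ] EuclideanSpace ℝ (Fin p) :=
      fA'.comp e.symm.toLinearMap
    have hg : ∀ x, g ⟨fB x, LinearMap.mem_range_self fB x⟩ = fA x := by
      intro x
      have h1 : e.symm ⟨fB x, LinearMap.mem_range_self fB x⟩ = (LinearMap.ker fB).mkQ x :=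
        fB.quotKerEquivRange_symm_apply_image x _
      simp only [g, LinearMap.comp_apply, LinearEquiv.coe_toLinearMap, h1]
      simp [fA', Submodule.mkQ_apply, Submodule.liftQ_apply]
    let L : LinearMap.range fB →ₗᵢ[ℝ] EuclideanSpace ℝ (Fin p) :=
      { toLinearMap := g
        norm_map' := by
          rintro ⟨-, x, rfl⟩
          show ‖g ⟨fB x, LinearMap.mem_range_self fB x⟩‖ = _
          rw [hg]
          exact (hnorm x).trans rfl }
    let E := L.extend
    have hE : ∀ x, E (fB x) = fA x := by
      intro x
      have h1 := L.extend_apply ⟨fB x, LinearMap.mem_range_self fB x⟩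
      exact h1.trans (hg x)
    set fJ := Matrix.toEuclideanLin J with hfJ
    have hJid : (LinearMap.adjoint fJ).comp fJ = LinearMap.id := by
      rw [← Matrix.toEuclideanLin_conjTranspose_eq_adjoint, hfJ, ← toEuclideanLin_mul,
        Matrix.conjTranspose_eq_transpose_of_trivial, hJJ,
        Matrix.toEuclideanLin_eq_toLin, Matrix.toLin_one]
    let Olin : EuclideanSpace ℝ (Fin q) →ₗ[ℝ] EuclideanSpace ℝ (Fin p) :=
      E.toLinearMap.comp fJ
    have hOinner : ∀ x y, (inner ℝ (Olin x) (Olin y) : ℝ) = inner ℝ x y := by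
      intro x y
      have h1 : (inner ℝ (Olin x) (Olin y) : ℝ) = inner ℝ (fJ x) (fJ y) := by
        simp only [Olin, LinearMap.comp_apply, LinearIsometry.coe_toLinearMap]
        exact E.inner_map_map (fJ x) (fJ y)
      rw [h1, ← LinearMap.adjoint_inner_right fJ]
      have h2 := congrFun (congrArg DFunLike.coe hJid) y
      simp only [LinearMap.comp_apply, LinearMap.id_apply] at h2
      rw [h2]
    refine ⟨Matrix.toEuclideanLin.symm Olin, ?_, ?_⟩
    · have hO : Matrix.toEuclideanLin (Matrix.toEuclideanLin.symm Olin) = Olin :=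
        Matrix.toEuclideanLin.apply_symm_apply Olin
      apply Matrix.toEuclideanLin.injective
      rw [toEuclideanLin_mul]
      have hOt : Matrix.toEuclideanLin (Matrix.toEuclideanLin.symm Olin)ᵀ =
          LinearMap.adjoint Olin := by
        rw [← Matrix.conjTranspose_eq_transpose_of_trivial,
          Matrix.toEuclideanLin_conjTranspose_eq_adjoint, hO]
      rw [hOt, hO, Matrix.toEuclideanLin_eq_toLin, Matrix.toLin_one]
      refine LinearMap.ext fun x => ?_
      refine ext_inner_left ℝ fun v => ?_
      rw [LinearMap.comp_apply, LinearMap.adjoint_inner_right, hOinner,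
        LinearMap.id_apply]
    · have hO : Matrix.toEuclideanLin (Matrix.toEuclideanLin.symm Olin) = Olin :=
        Matrix.toEuclideanLin.apply_symm_apply Olin
      apply Matrix.toEuclideanLin.injective
      rw [toEuclideanLin_mul, hO]
      refine LinearMap.ext fun x => ?_
      have h1 : fJ (Matrix.toEuclideanLin Λ x) = fB x := by
        rw [hfB, hBdef, toEuclideanLin_mul, LinearMap.comp_apply, hfJ]
      simp only [LinearMap.comp_apply, Olin, LinearIsometry.coe_toLinearMap]
      rw [h1]
      exact (hE x).symm
  · rintro ⟨O, hO, rfl⟩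
    rw [Matrix.transpose_mul, Matrix.mul_assoc, ← Matrix.mul_assoc Oᵀ, hO,
      Matrix.one_mul, hΛt, ← pow_two]
end

section
/- Let p, q ∈ ℕ with q ≤ p and let M ∈ ℝ^{p×q} admit a singular value decomposition M = UΣVᵀ, where U ∈ ℝ^{p×q} has orthonormal columns (UᵀU = I_q), V ∈ ℝ^{q×q} is orthogonal (VᵀV = I_q), and Σ ∈ ℝ^{q×q} is diagonal with nonnegative diagonal entries. Then for every O ∈ ℝ^{p×q} with orthonormal columns (OᵀO = I_q), trace(OᵀM) ≤ trace(Σ) = Σ_{j=1}^q Σ_{jj}, and equality holds for O = UVᵀ (which has orthonormal columns); i.e., O = UVᵀ maximizes trace(OᵀM) over matrices with orthonormal columns. -/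
open Matrix

lemma diag_le_one_of_orthonormal {p q : ℕ}
    (W U : Matrix (Fin p) (Fin q) ℝ)
    (hW : Wᵀ * W = 1) (hU : Uᵀ * U = 1) (j : Fin q) :
    (Wᵀ * U) j j ≤ 1 := by
  have hW' : ∑ i, W i j ^ 2 = 1 := by
    have := congrFun (congrFun hW j) j
    simp [Matrix.mul_apply, Matrix.one_apply, sq] at this ⊢
    simpa using this
  have hU' : ∑ i, U i j ^ 2 = 1 := by
    have := congrFun (congrFun hU j) j
    simp [Matrix.mul_apply, Matrix.one_apply, sq] at this ⊢
    simpa using this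
  have key : ∑ i, W i j * U i j ≤ ∑ i, (W i j ^ 2 + U i j ^ 2) / 2 := by
    apply Finset.sum_le_sum
    intro i _
    nlinarith [sq_nonneg (W i j - U i j)]
  have : ∑ i, (W i j ^ 2 + U i j ^ 2) / 2 = 1 := by
    rw [← Finset.sum_div, Finset.sum_add_distrib, hW', hU']
    norm_num
  calc (Wᵀ * U) j j = ∑ i, W i j * U i j := by simp [Matrix.mul_apply]
    _ ≤ 1 := by rw [← this]; exact key

lemma trace_mul_diag {q : ℕ} (A Sig : Matrix (Fin q) (Fin q) ℝ)
    (hSigDiag : Sig.IsDiag) :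
    (A * Sig).trace = ∑ j, A j j * Sig j j := by
  rw [Matrix.trace]
  apply Finset.sum_congr rfl
  intro j _
  rw [Matrix.diag_apply, Matrix.mul_apply]
  rw [Finset.sum_eq_single j]
  · intro k _ hk
    rw [hSigDiag hk, mul_zero]
  · simp

/-- Given an SVD `M = U Σ Vᵀ` of `M ∈ ℝ^{p×q}` (with `UᵀU = I_q`,
`VᵀV = I_q`, `Σ` diagonal with nonnegative entries), every `O ∈ ℝ^{p×q}` with
orthonormal columns satisfies `trace(OᵀM) ≤ trace(Σ) = ∑_j Σ_{jj}`, and `O = UVᵀ`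
has orthonormal columns and attains equality, i.e., it maximizes `trace(OᵀM)`. -/
theorem procrustes_trace_maximizer
    (p q : ℕ) (hpq : q ≤ p)
    (M U : Matrix (Fin p) (Fin q) ℝ) (V Sig : Matrix (Fin q) (Fin q) ℝ)
    (hU : Uᵀ * U = 1) (hV : Vᵀ * V = 1)
    (hSigDiag : Sig.IsDiag) (hSigNonneg : ∀ j, 0 ≤ Sig j j)
    (hSVD : M = U * Sig * Vᵀ) :
    (∀ O : Matrix (Fin p) (Fin q) ℝ, Oᵀ * O = 1 → (Oᵀ * M).trace ≤ Sig.trace) ∧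
    ((U * Vᵀ)ᵀ * (U * Vᵀ) = 1) ∧
    ((U * Vᵀ)ᵀ * M).trace = Sig.trace ∧
    Sig.trace = ∑ j, Sig j j := by
  have hVVt : V * Vᵀ = 1 := mul_eq_one_comm.mp hV
  refine ⟨?_, ?_, ?_, rfl⟩
  · intro O hO
    have hOV : (O * V)ᵀ * (O * V) = 1 := by
      rw [Matrix.transpose_mul, Matrix.mul_assoc, ← Matrix.mul_assoc Oᵀ, hO,
        Matrix.one_mul, hV]
    have hkey : (Oᵀ * M).trace = (((O * V)ᵀ * U) * Sig).trace := by
      rw [hSVD]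
      simp only [Matrix.transpose_mul, ← Matrix.mul_assoc]
      rw [Matrix.trace_mul_comm]
      simp only [← Matrix.mul_assoc]
    rw [hkey, trace_mul_diag _ _ hSigDiag, Matrix.trace]
    apply Finset.sum_le_sum
    intro j _
    have h1 : ((O * V)ᵀ * U) j j ≤ 1 := diag_le_one_of_orthonormal _ _ hOV hU j
    have := hSigNonneg j
    simp only [Matrix.diag_apply]
    nlinarith
  · rw [Matrix.transpose_mul, Matrix.transpose_transpose, Matrix.mul_assoc,
      ← Matrix.mul_assoc Uᵀ, hU, Matrix.one_mul, hVVt]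
  · rw [hSVD, Matrix.transpose_mul, Matrix.transpose_transpose]
    simp only [← Matrix.mul_assoc]
    rw [Matrix.mul_assoc V Uᵀ, hU, Matrix.mul_one, Matrix.trace_mul_comm,
      ← Matrix.mul_assoc, hV, Matrix.one_mul]
end
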